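/- Let G be a locally compact group and (H_i)_{i∈I} a family of closed subgroups of G such that each coset space H_i\G admits a non-zero G-invariant measure. Let (σ_i, 𝒦_i) be a unitary representation of H_i for each i. If the trivial representation 1_G is weakly contained in the direct sum ⊕_{i∈I} Ind_{H_i}^G σ_i, then 1_G is weakly contained in ⊕_{i∈I} λ_{H_i\G}, where λ_{H_i\G} is the quasi-regular representation of G on L²(H_i\G). -/

import Mathlib

open MeasureTheory Filter ENNReal

noncomputable section

/-!
Herz majoration: if `ξ` is almost invariant under `Ind σ`, then its pointwise norm `|ξ|` is almost
invariant under the quasi-regular representation with the same norm, because `σ` is unitary and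
`| ‖σ(h) u‖ - ‖v‖ | ≤ ‖σ(h) u - v‖` pointwise.
-/

section PointwiseNorm

variable {X : Type*} [MeasurableSpace X] {μ : Measure X} {p : ℝ≥0∞}
  {K : Type*} [NormedAddCommGroup K]

lemma eLpNorm_ofReal_norm (ξ : X → K) :
    eLpNorm (fun x => (‖ξ x‖ : ℂ)) p μ = eLpNorm ξ p μ :=
  eLpNorm_congr_norm_ae (Eventually.of_forall fun x => by simp)

lemma MeasureTheory.MemLp.ofReal_norm {ξ : X → K} (hξ : MemLp ξ p μ) :
    MemLp (fun x => (‖ξ x‖ : ℂ)) p μ :=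
  hξ.norm.ofReal

lemma eLpNorm_ofReal_norm_comp_sub_le (b : X → X) (U : X → K → K)
    (hU : ∀ x v, ‖U x v‖ = ‖v‖) (ξ : X → K) :
    eLpNorm (fun x => (‖ξ (b x)‖ : ℂ) - ‖ξ x‖) p μ ≤ eLpNorm (fun x => U x (ξ (b x)) - ξ x) p μ := by
  refine eLpNorm_mono fun x => ?_
  rw [← Complex.ofReal_sub, Complex.norm_real, Real.norm_eq_abs, ← hU x]
  exact abs_norm_sub_norm_le _ _

end PointwiseNorm

theorem herz_majoration_principle_general
    (G : Type*) [Group G] [TopologicalSpace G]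
    (I : Type*)
    (H : I → Subgroup G)
    -- Borel fundamental domains for the actions of G on the coset spaces Hᵢ\G,
    -- with non-zero G-invariant measures
    (X : I → Type*) [∀ i, MeasurableSpace (X i)] (μ : ∀ i, Measure (X i))
    (a : ∀ i, X i → G → X i)
    -- the cocycles coming from x g = c(x,g) (x ⋅ g)
    (c : ∀ i, X i → G → H i)
    -- the unitary representations (σ i, K i) of the subgroups H i
    (K : I → Type*) [∀ i, NormedAddCommGroup (K i)] [∀ i, InnerProductSpace ℂ (K i)]
    (σ : ∀ i, (H i) →* ((K i) →L[ℂ] (K i)))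
    (hσ_unitary : ∀ i (h : H i) (ξ : K i), ‖σ i h ξ‖ = ‖ξ‖)
    -- hypothesis: 1_G is weakly contained in ⊕ᵢ Ind_{H i}^G (σ i)
    (hweak : ∀ Q : Set G, IsCompact Q → ∀ ε : ℝ, 0 < ε →
      ∃ ξ : ∀ i, X i → K i,
        (∀ i, MemLp (ξ i) 2 (μ i)) ∧
        (∑' i, (eLpNorm (ξ i) 2 (μ i)) ^ 2) = 1 ∧
        ∀ g ∈ Q, (∑' i,
            (eLpNorm (fun x => σ i (c i x g) (ξ i (a i x g)) - ξ i x) 2 (μ i)) ^ 2) ≤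
          ENNReal.ofReal ε) :
    -- conclusion: 1_G is weakly contained in ⊕ᵢ λ_{Hᵢ\G}
    ∀ Q : Set G, IsCompact Q → ∀ ε : ℝ, 0 < ε →
      ∃ φ : ∀ i, X i → ℂ,
        (∀ i, MemLp (φ i) 2 (μ i)) ∧
        (∑' i, (eLpNorm (φ i) 2 (μ i)) ^ 2) = 1 ∧
        ∀ g ∈ Q, (∑' i,
            (eLpNorm (fun x => φ i (a i x g) - φ i x) 2 (μ i)) ^ 2) ≤
          ENNReal.ofReal ε := by
  intro Q hQ ε hε
  obtain ⟨ξ, hξ_memLp, hξ_norm, hξ_almostInv⟩ := hweak Q hQ ε hε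
  refine ⟨fun i x => (‖ξ i x‖ : ℂ), fun i => (hξ_memLp i).ofReal_norm, ?_, fun g hg => ?_⟩
  · simpa only [eLpNorm_ofReal_norm] using hξ_norm
  · refine le_trans (ENNReal.tsum_le_tsum fun i => ?_) (hξ_almostInv g hg)
    gcongr
    exact eLpNorm_ofReal_norm_comp_sub_le _ (fun x => σ i (c i x g)) (fun x => hσ_unitary i _) _

/-- **Lemma (generalized Herz majoration principle).**  Let `G` be a locally compact group
and `(H i)_{i ∈ I}` a family of closed subgroups such that each coset space `Hᵢ\G` admits a
non-zero `G`-invariant measure.  Each coset space is realized, as in the standard model for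
induced representations, by a Borel fundamental domain `X i` with invariant measure `μ i`,
right `G`-action `a i : X i → G → X i` and cocycle `c i : X i → G → H i` (coming from
`x·g = c(x,g)(x ⋅ g)`); the representation induced from a unitary representation
`(σ i, K i)` of `H i` acts on `L²(X i, K i, μ i)` by `(π(g)ξ)(x) = σ(c(x,g)) ξ(x⋅g)`, and
the quasi-regular representation `λ_{Hᵢ\G}` acts on `L²(X i, μ i)` by `(λ(g)φ)(x) = φ(x⋅g)`.
If the trivial representation `1_G` is weakly contained in `⊕ᵢ Ind_{H i}^G σ i` — i.e. for
every compact `Q ⊆ G` and `ε > 0` there is a `(Q,ε)`-invariant unit vector — then `1_G` is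
weakly contained in `⊕ᵢ λ_{Hᵢ\G}`. -/
theorem herz_majoration_principle
    (G : Type*) [Group G] [TopologicalSpace G] [IsTopologicalGroup G] [LocallyCompactSpace G]
    (I : Type*)
    (H : I → Subgroup G) (hHclosed : ∀ i, IsClosed ((H i) : Set G))
    -- Borel fundamental domains for the actions of G on the coset spaces Hᵢ\G,
    -- with non-zero G-invariant measures
    (X : I → Type*) [∀ i, MeasurableSpace (X i)] (μ : ∀ i, Measure (X i))
    (hμ : ∀ i, μ i ≠ 0)
    (a : ∀ i, X i → G → X i)
    (ha_one : ∀ i x, a i x 1 = x)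
    (ha_mul : ∀ i x g h, a i x (g * h) = a i (a i x g) h)
    (ha_mp : ∀ i g, MeasurePreserving (fun x => a i x g) (μ i) (μ i))
    -- the cocycles coming from x g = c(x,g) (x ⋅ g)
    (c : ∀ i, X i → G → H i)
    (hc : ∀ i x g h, c i x (g * h) = c i x g * c i (a i x g) h)
    -- the unitary representations (σ i, K i) of the subgroups H i
    (K : I → Type*) [∀ i, NormedAddCommGroup (K i)] [∀ i, InnerProductSpace ℂ (K i)]
    (σ : ∀ i, (H i) →* ((K i) →L[ℂ] (K i)))
    (hσ_unitary : ∀ i (h : H i) (ξ : K i), ‖σ i h ξ‖ = ‖ξ‖)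
    -- hypothesis: 1_G is weakly contained in ⊕ᵢ Ind_{H i}^G (σ i)
    (hweak : ∀ Q : Set G, IsCompact Q → ∀ ε : ℝ, 0 < ε →
      ∃ ξ : ∀ i, X i → K i,
        (∀ i, MemLp (ξ i) 2 (μ i)) ∧
        (∑' i, (eLpNorm (ξ i) 2 (μ i)) ^ 2) = 1 ∧
        ∀ g ∈ Q, (∑' i,
            (eLpNorm (fun x => σ i (c i x g) (ξ i (a i x g)) - ξ i x) 2 (μ i)) ^ 2) ≤
          ENNReal.ofReal ε) :
    -- conclusion: 1_G is weakly contained in ⊕ᵢ λ_{Hᵢ\G}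
    ∀ Q : Set G, IsCompact Q → ∀ ε : ℝ, 0 < ε →
      ∃ φ : ∀ i, X i → ℂ,
        (∀ i, MemLp (φ i) 2 (μ i)) ∧
        (∑' i, (eLpNorm (φ i) 2 (μ i)) ^ 2) = 1 ∧
        ∀ g ∈ Q, (∑' i,
            (eLpNorm (fun x => φ i (a i x g) - φ i x) 2 (μ i)) ^ 2) ≤
          ENNReal.ofReal ε :=
  herz_majoration_principle_general G I H X μ a c K σ hσ_unitary hweak

end
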